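/- arXiv:2504.06984 — 3 statements merged into one kernel-verified Lean document; each statement's English description precedes it below -/
import Mathlib

section
/- Let Φ and Φ̂ be finite measures on a measurable space S, let λ be a measure on S, let 𝒜 be a collection of measurable subsets of S, and let α > 0, ψ ≥ 0. Suppose that sup_{A∈𝒜} |Φ̂(A) − Φ(A)| ≤ ψ, and let Ω̂ ∈ 𝒜 attain the minimum of λ(A) over the collection {A ∈ 𝒜 : Φ̂(A) ≥ α − ψ}. Then Φ(Ω̂) ≥ α − 2ψ and λ(Ω̂) ≤ inf { λ(A) : A ∈ 𝒜, Φ(A) ≥ α }. -/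
open MeasureTheory Set

/-- **Deterministic guarantee for empirical minimum-volume sets.**
If `Φ̂` approximates `Φ` uniformly over `𝒜` within `ψ`, and `Ω̂ ∈ 𝒜` minimizes `λ` over
`{A ∈ 𝒜 : Φ̂(A) ≥ α - ψ}`, then `Φ(Ω̂) ≥ α - 2ψ` and
`λ(Ω̂) ≤ inf {λ(A) : A ∈ 𝒜, Φ(A) ≥ α}`. -/
theorem empirical_mv_set_guarantee
    {S : Type*} [MeasurableSpace S]
    (Φ Φhat : Measure S) [IsFiniteMeasure Φ] [IsFiniteMeasure Φhat]
    (lam : Measure S) (𝒜 : Set (Set S)) (α ψ : ℝ) (hα : 0 < α) (hψ : 0 ≤ ψ)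
    (hdev : ∀ A ∈ 𝒜, |(Φhat A).toReal - (Φ A).toReal| ≤ ψ)
    (Ωhat : Set S) (hmem : Ωhat ∈ 𝒜)
    (hfeas : α - ψ ≤ (Φhat Ωhat).toReal)
    (hmin : ∀ A ∈ 𝒜, α - ψ ≤ (Φhat A).toReal → lam Ωhat ≤ lam A) :
    α - 2 * ψ ≤ (Φ Ωhat).toReal ∧
      lam Ωhat ≤ ⨅ (A : Set S) (_ : A ∈ 𝒜) (_ : α ≤ (Φ A).toReal), lam A := by
  constructor
  · have h := abs_le.mp (hdev Ωhat hmem)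
    linarith [h.1]
  · refine le_iInf fun A => le_iInf fun hA => le_iInf fun hΦA => ?_
    have h := abs_le.mp (hdev A hA)
    exact hmin A hA (by linarith [h.2])
end

section
/- Let (X, Z) be a random pair in ℝ^d × ℝ with P(X = 0) = 0, where ℝ^d and ℝ^{d+1} carry norms ‖·‖ such that the canonical basis vectors have norm one and ‖(x, 0)‖ = ‖x‖ for all x ∈ ℝ^d. Assume (X, Z) is regularly varying in ℝ^{d+1}: t ↦ P(‖(X,Z)‖ > t) is regularly varying with index α > 0 and the conditional law of t⁻¹(X, Z) given ‖(X, Z)‖ > t converges weakly, as t → ∞, to a probability distribution Π_∞ supported on {(x, z) : ‖(x, z)‖ > 1}, with Π_∞({(x, z) : ‖x‖ > 1}) > 0. Define Y = Z/‖X‖. Then the pair (X, Y) satisfies: t ↦ P(‖X‖ > t) is regularly varying with index α > 0, and the conditional law of (t⁻¹X, Y) given ‖X‖ > t converges weakly, as t → ∞, to a probability distribution P_∞ on {(x, y) ∈ ℝ^{d+1} : ‖x‖ > 1}. -/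
open MeasureTheory ProbabilityTheory Filter Set
open scoped ENNReal Topology

/-- Weak convergence, as `t → ∞`, of a family of (finite) measures to a limit measure,
tested against bounded continuous functions. -/
def TendstoWeakly {E : Type*} [MeasurableSpace E] [TopologicalSpace E]
    (μ : ℝ → Measure E) (ν : Measure E) : Prop :=
  ∀ f : BoundedContinuousFunction E ℝ,
    Filter.Tendsto (fun t => ∫ x, f x ∂(μ t)) Filter.atTop (𝓝 (∫ x, f x ∂ν))

/-- `N` is a norm function on the real vector space `E`. -/
def IsNormFun {E : Type*} [AddCommGroup E] [Module ℝ E] (N : E → ℝ) : Prop :=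
  (∀ x y, N (x + y) ≤ N x + N y) ∧ (∀ (c : ℝ) x, N (c • x) = |c| * N x) ∧
    (∀ x, x ≠ 0 → 0 < N x)

/-- The survival function of (the real random variable) `R` is regularly varying with
index `α`:  `P(R > tx)/P(R > t) → x^{-α}` for all `x > 0`. -/
def SurvivalRegVarying {Ω : Type*} [MeasureSpace Ω] (R : Ω → ℝ) (α : ℝ) : Prop :=
  ∀ x : ℝ, 0 < x → Filter.Tendsto
    (fun t => (ℙ {ω | t * x < R ω}).toReal / (ℙ {ω | t < R ω}).toReal)
    Filter.atTop (𝓝 (x ^ (-α)))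

/-!
Choose a level `s` with `‖x‖ ≤ s ‖(x, z)‖` everywhere (the two norms are equivalent) and
`Π_∞ {‖x‖ = s} = 0`, and put `A = {‖x‖ > s}`. Since `‖X‖ > s u` forces `‖(X, Z)‖ > u`,
`P(‖X‖ > s u) = P(‖(X, Z)‖ > u) · μ_u(A)`, where `μ_u` is the conditional law of `u⁻¹ (X, Z)`
given `‖(X, Z)‖ > u`. By the portmanteau theorem `μ_u(A) → Π_∞(A)`, and `Π_∞(A) > 0` since otherwise
`Π_∞ {‖x‖ > 1} ≤ liminf P(‖X‖ > t) / P(‖(X, Z)‖ > t) = 0`; this transfers regular variation from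
`‖(X, Z)‖` to `‖X‖`. Moreover the conditional law of `(t⁻¹ X, Y)` given `‖X‖ > t` is the image of
`μ_{t/s}` conditioned on `A` under a continuous map, so it converges to the image
of `Π_∞` conditioned on `A`.
-/

namespace IsNormFun

section Module

variable {E : Type*} [AddCommGroup E] [Module ℝ E] {N : E → ℝ}

lemma map_zero (h : IsNormFun N) : N 0 = 0 := by
  simpa using h.2.1 0 0

lemma nonneg (h : IsNormFun N) (x : E) : 0 ≤ N x := by
  have htri : N (x + (-1 : ℝ) • x) ≤ N x + N ((-1 : ℝ) • x) := h.1 _ _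
  rw [h.2.1, neg_one_smul, add_neg_cancel, h.map_zero, abs_neg, abs_one] at htri
  linarith

lemma map_smul_of_pos (h : IsNormFun N) {c : ℝ} (hc : 0 < c) (x : E) : N (c • x) = c * N x := by
  rw [h.2.1, abs_of_pos hc]

lemma lt_map_inv_smul_iff (h : IsNormFun N) {u : ℝ} (hu : 0 < u) (s : ℝ) (x : E) :
    s < N (u⁻¹ • x) ↔ s * u < N x := by
  rw [h.map_smul_of_pos (inv_pos.mpr hu), ← div_eq_inv_mul, lt_div_iff₀ hu]

lemma convexOn (h : IsNormFun N) : ConvexOn ℝ univ N := by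
  refine ⟨convex_univ, fun x _ y _ a b ha hb _ => ?_⟩
  calc N (a • x + b • y) ≤ N (a • x) + N (b • y) := h.1 _ _
    _ = a • N x + b • N y := by rw [h.2.1, h.2.1, abs_of_nonneg ha, abs_of_nonneg hb]; rfl

end Module

section FiniteDimensional

variable {E : Type*} [NormedAddCommGroup E] [NormedSpace ℝ E] [FiniteDimensional ℝ E]
  {N : E → ℝ}

lemma continuous (h : IsNormFun N) : Continuous N :=
  continuousOn_univ.mp (h.convexOn.continuousOn isOpen_univ)

lemma exists_le_mul [Nontrivial E] (h : IsNormFun N) {p : E → ℝ} (hp : Continuous p)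
    (hp_smul : ∀ (c : ℝ) x, p (c • x) = |c| * p x) : ∃ C, ∀ x, p x ≤ C * N x := by
  have hN_pos : ∀ u ∈ Metric.sphere (0 : E) 1, N u ≠ 0 := fun u hu =>
    (h.2.2 u (ne_zero_of_mem_unit_sphere ⟨u, hu⟩)).ne'
  obtain ⟨u₀, -, hmax⟩ := (isCompact_sphere (0 : E) 1).exists_isMaxOn
    (NormedSpace.sphere_nonempty.mpr zero_le_one)
    (hp.continuousOn.div h.continuous.continuousOn hN_pos)
  refine ⟨p u₀ / N u₀, fun x => ?_⟩
  rcases eq_or_ne x 0 with rfl | hx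
  · simp [h.map_zero, (by simpa using hp_smul 0 0 : p 0 = 0)]
  have hnx : 0 < ‖x‖ := norm_pos_iff.mpr hx
  set u := ‖x‖⁻¹ • x
  have hu : u ∈ Metric.sphere (0 : E) 1 := by
    simp [u, norm_smul, inv_mul_cancel₀ hnx.ne']
  have hxu : x = ‖x‖ • u := by simp [u, smul_smul, mul_inv_cancel₀ hnx.ne']
  have hbound : p u ≤ p u₀ / N u₀ * N u :=
    (div_le_iff₀ (h.2.2 u (ne_zero_of_mem_unit_sphere ⟨u, hu⟩))).mp (hmax hu)
  rw [hxu, hp_smul, h.2.1, abs_norm, mul_left_comm]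
  exact mul_le_mul_of_nonneg_left hbound hnx.le

end FiniteDimensional

end IsNormFun

namespace TendstoWeakly

section Basic

variable {E F : Type*} [MeasurableSpace E] [TopologicalSpace E] {μ μ' : ℝ → Measure E}
  {ν : Measure E}

lemma congr' (h : TendstoWeakly μ ν) (hμ : μ =ᶠ[atTop] μ') : TendstoWeakly μ' ν := fun f =>
  (h f).congr' (hμ.mono fun t ht => by rw [ht])

lemma comp_tendsto (h : TendstoWeakly μ ν) {φ : ℝ → ℝ} (hφ : Tendsto φ atTop atTop) :
    TendstoWeakly (μ ∘ φ) ν := fun f => (h f).comp hφ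

lemma map [OpensMeasurableSpace E] [MeasurableSpace F] [TopologicalSpace F] [BorelSpace F]
    (h : TendstoWeakly μ ν) {g : E → F} (hg : Continuous g) :
    TendstoWeakly (fun t => (μ t).map g) (ν.map g) := by
  intro f
  have hf {m : Measure F} : AEStronglyMeasurable f m :=
    f.continuous.measurable.aestronglyMeasurable
  simp only [integral_map hg.measurable.aemeasurable hf]
  exact h (f.compContinuous ⟨g, hg⟩)

end Basic

section Probability

variable {E : Type*} [MeasurableSpace E] [TopologicalSpace E] [OpensMeasurableSpace E]
  {μ : ℝ → Measure E} [hμ : ∀ t, IsProbabilityMeasure (μ t)] {ν : Measure E}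
  [IsProbabilityMeasure ν]

lemma tendsto_probabilityMeasure (h : TendstoWeakly μ ν) :
    Tendsto (β := ProbabilityMeasure E) (fun t => ⟨μ t, hμ t⟩) atTop (𝓝 ⟨ν, ‹_›⟩) :=
  ProbabilityMeasure.tendsto_iff_forall_integral_tendsto.mpr h

lemma le_liminf_measure_open [HasOuterApproxClosed E] (h : TendstoWeakly μ ν) {G : Set E}
    (hG : IsOpen G) : ν G ≤ liminf (fun t => μ t G) atTop :=
  ProbabilityMeasure.le_liminf_measure_open_of_tendsto h.tendsto_probabilityMeasure hG

lemma tendsto_measure_of_null_frontier [HasOuterApproxClosed E] (h : TendstoWeakly μ ν)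
    {A : Set E} (hA : ν (frontier A) = 0) : Tendsto (fun t => μ t A) atTop (𝓝 (ν A)) :=
  ProbabilityMeasure.tendsto_measure_of_null_frontier_of_tendsto' h.tendsto_probabilityMeasure hA

lemma cond [HasOuterApproxClosed E] (h : TendstoWeakly μ ν) {A : Set E} (hA : IsOpen A)
    (hA_fr : ν (frontier A) = 0) (hνA : ν A ≠ 0) :
    TendstoWeakly (fun t => (μ t)[|A]) (ν[|A]) := by
  classical
  have hlim := h.tendsto_measure_of_null_frontier hA_fr
  have hνA_cond := cond_isProbabilityMeasure (μ := ν) hνA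
  -- The dummy branch only makes `ρ` a family of probability measures; eventually `μ t A ≠ 0`.
  let ρ : ℝ → ProbabilityMeasure E := fun t =>
    if hμA : μ t A = 0 then ⟨ν[|A], hνA_cond⟩ else ⟨(μ t)[|A], cond_isProbabilityMeasure hμA⟩
  have hρ : ∀ᶠ t in atTop, (ρ t : Measure E) = (μ t)[|A] :=
    (hlim.eventually_ne hνA).mono fun t ht => by simp [ρ, ht]
  suffices hρ_lim : Tendsto ρ atTop (𝓝 ⟨ν[|A], hνA_cond⟩) from fun f =>
    (ProbabilityMeasure.tendsto_iff_forall_integral_tendsto.mp hρ_lim f).congr'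
      (hρ.mono fun t ht => by rw [ht])
  refine tendsto_of_forall_isOpen_le_liminf' fun G hG => ?_
  calc ν[|A] G = (ν A)⁻¹ * ν (A ∩ G) := cond_apply hA.measurableSet ν G
    _ ≤ liminf (fun t => (μ t A)⁻¹) atTop * liminf (fun t => μ t (A ∩ G)) atTop := by
      rw [hlim.inv.liminf_eq]
      gcongr
      exact h.le_liminf_measure_open (hA.inter hG)
    _ ≤ liminf (fun t => (μ t A)⁻¹ * μ t (A ∩ G)) atTop := ENNReal.le_liminf_mul
    _ = liminf (fun t => (ρ t : Measure E) G) atTop :=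
      liminf_congr (hρ.mono fun t ht => by rw [ht, cond_apply hA.measurableSet])

end Probability

end TendstoWeakly

lemma exists_lt_measure_level_set_eq_zero {α : Type*} [MeasurableSpace α] (μ : Measure α)
    [SFinite μ] {g : α → ℝ} (hg : Measurable g) (c : ℝ) :
    ∃ s, c < s ∧ μ {x | g x = s} = 0 := by
  obtain ⟨s, hs, hcs⟩ :=
    ((Measure.countable_meas_level_set_pos (μ := μ) hg).dense_compl ℝ).exists_gt c
  exact ⟨s, hcs, by simpa using hs⟩

namespace SurvivalRegVarying

variable {Ω : Type*} [MeasureSpace Ω] {R S : Ω → ℝ} {α : ℝ}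

lemma measure_ne_zero (h : SurvivalRegVarying R α) (t : ℝ) : ℙ {ω | t < R ω} ≠ 0 := by
  intro ht
  have hzero : ∀ᶠ u in atTop, (ℙ {ω | u * 1 < R ω}).toReal / (ℙ {ω | u < R ω}).toReal = 0 :=
    (eventually_ge_atTop t).mono fun u hu => by
      have hu0 : ℙ {ω | u < R ω} = 0 := measure_mono_null (fun ω hω => hu.trans_lt hω) ht
      simp [hu0]
  simpa using tendsto_nhds_unique tendsto_const_nhds ((h 1 one_pos).congr' hzero)

variable {s c : ℝ} {a : ℝ → ℝ}

lemma of_measure_eq_mul (hR : SurvivalRegVarying R α) (hs : 0 < s) (ha : Tendsto a atTop (𝓝 c))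
    (hc : c ≠ 0)
    (hSR : ∀ u, 0 < u → (ℙ {ω | s * u < S ω}).toReal = (ℙ {ω | u < R ω}).toReal * a u) :
    SurvivalRegVarying S α := by
  intro x hx
  have hdiv : Tendsto (fun t => t / s) atTop atTop := tendsto_id.atTop_div_const hs
  have hlim := ((hR x hx).comp hdiv).mul ((ha.comp (hdiv.atTop_mul_const hx)).div
    (ha.comp hdiv) hc)
  rw [div_self hc, mul_one] at hlim
  refine hlim.congr' ((eventually_gt_atTop 0).mono fun t ht => ?_)
  have hu : 0 < t / s := div_pos ht hs
  have hStx : (ℙ {ω | t * x < S ω}).toReal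
      = (ℙ {ω | t / s * x < R ω}).toReal * a (t / s * x) := by
    rw [← hSR _ (mul_pos hu hx), show s * (t / s * x) = t * x by field_simp]
  have hSt : (ℙ {ω | t < S ω}).toReal = (ℙ {ω | t / s < R ω}).toReal * a (t / s) := by
    rw [← hSR _ hu, mul_div_cancel₀ t hs.ne']
  simp only [Function.comp_apply, Pi.div_apply]
  rw [hStx, hSt, mul_div_mul_comm]

lemma tendsto_measure_div_of_measure_eq_mul (hR : SurvivalRegVarying R α) (hs : 0 < s)
    (ha : Tendsto a atTop (𝓝 c))
    (hSR : ∀ u, 0 < u → (ℙ {ω | s * u < S ω}).toReal = (ℙ {ω | u < R ω}).toReal * a u) :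
    Tendsto (fun t => (ℙ {ω | t < S ω}).toReal / (ℙ {ω | t < R ω}).toReal) atTop
      (𝓝 (c * s ^ α)) := by
  have hlim := (ha.comp (tendsto_id.atTop_div_const hs)).mul (hR s⁻¹ (inv_pos.mpr hs))
  rw [Real.inv_rpow hs.le, Real.rpow_neg hs.le, inv_inv] at hlim
  refine hlim.congr' ((eventually_gt_atTop 0).mono fun t ht => ?_)
  have hSt : (ℙ {ω | t < S ω}).toReal = (ℙ {ω | t / s < R ω}).toReal * a (t / s) := by
    rw [← hSR _ (div_pos ht hs), mul_div_cancel₀ t hs.ne']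
  simp only [Function.comp_apply, id]
  rw [hSt, div_eq_mul_inv t s]
  ring

end SurvivalRegVarying

lemma map_cond {α β : Type*} [MeasurableSpace α] [MeasurableSpace β] {g : α → β}
    (hg : Measurable g) (μ : Measure α) {A : Set β} (hA : MeasurableSet A) :
    (μ.map g)[|A] = (μ[|g ⁻¹' A]).map g := by
  simp only [ProbabilityTheory.cond, Measure.map_apply hg hA, Measure.restrict_map hg hA,
    Measure.map_smul]

lemma Measurable.const_inv_smul {α F : Type*} [MeasurableSpace α] [MeasurableSpace F] [SMul ℝ F]
    [MeasurableConstSMul ℝ F] {V : α → F} (hV : Measurable V) (u : ℝ) :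
    Measurable fun ω => u⁻¹ • V ω :=
  (measurable_const_smul u⁻¹).comp hV

noncomputable def tailLaw {Ω F : Type*} [MeasureSpace Ω] [MeasurableSpace F] [SMul ℝ F]
    (V : Ω → F) (N : F → ℝ) (t : ℝ) : Measure F :=
  (ℙ[|{ω | t < N (V ω)}]).map (fun ω => t⁻¹ • V ω)

/-- On `{p | s < N p.1}` this is `p ↦ (s⁻¹ • p.1, p.2 / N p.1)`; capping the denominator below
by `s` makes it continuous. -/
noncomputable def cappedRatio {E : Type*} [SMul ℝ E] (N : E → ℝ) (s : ℝ) (p : E × ℝ) : E × ℝ :=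
  (s⁻¹ • p.1, p.2 / max s (N p.1))

lemma measurableSet_setOf_lt_comp {α β : Type*} [MeasurableSpace α] [MeasurableSpace β]
    {f : β → ℝ} {g : α → β} (hf : Measurable f) (hg : Measurable g) (c : ℝ) :
    MeasurableSet {x | c < f (g x)} :=
  measurableSet_lt measurable_const (hf.comp hg)

lemma setOf_lt_subset_of_le_mul {Ω E : Type*} {V : Ω → E × ℝ} {Nd : E → ℝ} {N1 : E × ℝ → ℝ}
    {s : ℝ} (hs : 0 < s) (hdom : ∀ p, Nd p.1 ≤ s * N1 p) (u : ℝ) :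
    {ω | s * u < Nd (V ω).1} ⊆ {ω | u < N1 (V ω)} := fun ω hω =>
  lt_of_mul_lt_mul_left (hω.trans_le (hdom (V ω))) hs.le

section RescaledTarget

variable {Ω E : Type*} [NormedAddCommGroup E] [NormedSpace ℝ E] {V : Ω → E × ℝ} {Nd : E → ℝ}
  {N1 : E × ℝ → ℝ} {s u : ℝ}

lemma continuous_cappedRatio (hNd : Continuous Nd) (hs : 0 < s) :
    Continuous (cappedRatio Nd s) :=
  (continuous_fst.const_smul _).prodMk (continuous_snd.div
    (continuous_const.max (hNd.comp continuous_fst)) fun _ => (hs.trans_le (le_max_left _ _)).ne')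

lemma preimage_smul_superlevel (hNd : IsNormFun Nd) (hu : 0 < u) :
    (fun ω => u⁻¹ • V ω) ⁻¹' {p | s < Nd p.1} = {ω | s * u < Nd (V ω).1} := by
  ext ω
  exact hNd.lt_map_inv_smul_iff hu s (V ω).1

variable [MeasurableSpace E] [BorelSpace E]

lemma exists_le_mul_null_frontier_superlevel [FiniteDimensional ℝ E] (hNd : IsNormFun Nd)
    (hN1 : IsNormFun N1) (μ : Measure (E × ℝ)) [SFinite μ] :
    ∃ s, 0 < s ∧ (∀ p, Nd p.1 ≤ s * N1 p) ∧ μ (frontier {p | s < Nd p.1}) = 0 := by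
  have hNd_fst : Continuous fun p : E × ℝ => Nd p.1 := hNd.continuous.comp continuous_fst
  obtain ⟨C, hC⟩ := hN1.exists_le_mul hNd_fst fun c p => hNd.2.1 c p.1
  obtain ⟨s, hCs, hs_null⟩ := exists_lt_measure_level_set_eq_zero μ hNd_fst.measurable (max C 0)
  refine ⟨s, (le_max_right C 0).trans_lt hCs, fun p => (hC p).trans ?_, measure_mono_null
    (fun p hp => (frontier_lt_subset_eq continuous_const hNd_fst hp).symm) hs_null⟩
  exact mul_le_mul_of_nonneg_right ((le_max_left C 0).trans hCs.le) (hN1.nonneg p)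

variable [MeasureSpace Ω] [IsProbabilityMeasure (ℙ : Measure Ω)]

lemma isProbabilityMeasure_tailLaw (hV : Measurable V) {t : ℝ}
    (ht : ℙ {ω | t < N1 (V ω)} ≠ 0) : IsProbabilityMeasure (tailLaw V N1 t) :=
  have := cond_isProbabilityMeasure ht
  Measure.isProbabilityMeasure_map (hV.const_inv_smul t).aemeasurable

lemma measure_mul_tailLaw_superlevel (hV : Measurable V) (hN1 : Measurable N1)
    (hNd : IsNormFun Nd) (hNd_meas : Measurable Nd) (hu : 0 < u) :
    ℙ {ω | u < N1 (V ω)} * tailLaw V N1 u {p | s < Nd p.1}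
      = ℙ ({ω | u < N1 (V ω)} ∩ {ω | s * u < Nd (V ω).1}) := by
  rw [tailLaw, Measure.map_apply (hV.const_inv_smul u)
      (measurableSet_setOf_lt_comp hNd_meas measurable_fst s), preimage_smul_superlevel hNd hu,
    mul_comm, cond_mul_eq_inter (measurableSet_setOf_lt_comp hN1 hV u)]

lemma tailLaw_cond_superlevel (hV : Measurable V) (hN1 : Measurable N1) (hNd : IsNormFun Nd)
    (hNd_meas : Measurable Nd) (hs : 0 < s) (hdom : ∀ p, Nd p.1 ≤ s * N1 p) (hu : 0 < u) :
    (tailLaw V N1 u)[|{p | s < Nd p.1}]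
      = (ℙ[|{ω | s * u < Nd (V ω).1}]).map (fun ω => u⁻¹ • V ω) := by
  rw [tailLaw,
    map_cond (hV.const_inv_smul u) _ (measurableSet_setOf_lt_comp hNd_meas measurable_fst s),
    preimage_smul_superlevel hNd hu,
    cond_cond_eq_cond_inter (measurableSet_setOf_lt_comp hN1 hV u)
      (measurableSet_setOf_lt_comp hNd_meas hV.fst (s * u)),
    inter_eq_right.mpr (setOf_lt_subset_of_le_mul hs hdom u)]

lemma measure_superlevel_toReal_eq (hV : Measurable V) (hN1 : Measurable N1)
    (hNd : IsNormFun Nd) (hNd_meas : Measurable Nd) (hs : 0 < s) (hdom : ∀ p, Nd p.1 ≤ s * N1 p)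
    (hu : 0 < u) :
    (ℙ {ω | s * u < Nd (V ω).1}).toReal
      = (ℙ {ω | u < N1 (V ω)}).toReal * (tailLaw V N1 u {p | s < Nd p.1}).toReal := by
  rw [← ENNReal.toReal_mul, measure_mul_tailLaw_superlevel hV hN1 hNd hNd_meas hu,
    inter_eq_right.mpr (setOf_lt_subset_of_le_mul hs hdom u)]

lemma map_cond_superlevel_eq_map_cappedRatio (hV : Measurable V) (hN1 : Measurable N1)
    (hNd : IsNormFun Nd) (hNd_cont : Continuous Nd) (hs : 0 < s)
    (hdom : ∀ p, Nd p.1 ≤ s * N1 p) {t : ℝ} (ht : 0 < t) :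
    (ℙ[|{ω | t < Nd (V ω).1}]).map (fun ω => (t⁻¹ • (V ω).1, (V ω).2 / Nd (V ω).1))
      = ((tailLaw V N1 (t / s))[|{p | s < Nd p.1}]).map (cappedRatio Nd s) := by
  have hu : 0 < t / s := div_pos ht hs
  rw [tailLaw_cond_superlevel hV hN1 hNd hNd_cont.measurable hs hdom hu,
    mul_div_cancel₀ t hs.ne', Measure.map_map (continuous_cappedRatio hNd_cont hs).measurable
      (hV.const_inv_smul _)]
  refine Measure.map_congr ((ae_cond_mem (measurableSet_setOf_lt_comp hNd_cont.measurable
    hV.fst t)).mono fun ω hω => ?_)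
  have hNdV : Nd ((t / s)⁻¹ • (V ω).1) = (t / s)⁻¹ * Nd (V ω).1 :=
    hNd.map_smul_of_pos (inv_pos.mpr hu) _
  have hmax : max s (Nd ((t / s)⁻¹ • (V ω).1)) = (t / s)⁻¹ * Nd (V ω).1 := by
    rw [max_eq_right, hNdV]
    exact ((hNd.lt_map_inv_smul_iff hu s _).mpr (by rwa [mul_div_cancel₀ t hs.ne'])).le
  simp only [Function.comp_apply, cappedRatio, Prod.smul_fst, Prod.smul_snd, smul_eq_mul, hmax,
    smul_smul]
  congr 1
  · rw [← mul_inv, mul_div_cancel₀ t hs.ne']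
  · rw [mul_div_mul_left _ _ (inv_ne_zero hu.ne')]

lemma map_cappedRatio_cond_superlevel_apply_eq_zero (hNd : IsNormFun Nd)
    (hNd_cont : Continuous Nd) (hs : 0 < s) (μ : Measure (E × ℝ)) :
    ((μ[|{p | s < Nd p.1}]).map (cappedRatio Nd s)) {q | ¬ 1 < Nd q.1} = 0 := by
  have hB : MeasurableSet {q : E × ℝ | ¬ 1 < Nd q.1} :=
    (measurableSet_setOf_lt_comp hNd_cont.measurable measurable_fst 1).compl
  have hempty : {p | s < Nd p.1} ∩ cappedRatio Nd s ⁻¹' {q | ¬ 1 < Nd q.1} = ∅ := by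
    ext p
    simp only [mem_inter_iff, mem_preimage, mem_ofPred_eq, cappedRatio, mem_empty_iff_false,
      iff_false, not_and, not_not]
    intro hp
    rwa [hNd.map_smul_of_pos (inv_pos.mpr hs), ← div_eq_inv_mul, one_lt_div hs]
  rw [Measure.map_apply (continuous_cappedRatio hNd_cont hs).measurable hB,
    cond_apply (measurableSet_setOf_lt_comp hNd_cont.measurable measurable_fst s), hempty,
    measure_empty, mul_zero]

variable {Pinf : Measure (E × ℝ)} [IsProbabilityMeasure Pinf]

lemma measure_superlevel_ne_zero (hV : Measurable V) (hN1 : Measurable N1) (hNd : IsNormFun Nd)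
    (hNd_cont : Continuous Nd) (hs : 0 < s) (hdom : ∀ p, Nd p.1 ≤ s * N1 p) {α : ℝ}
    (hRV : SurvivalRegVarying (fun ω => N1 (V ω)) α) (hconv : TendstoWeakly (tailLaw V N1) Pinf)
    (hA_fr : Pinf (frontier {p | s < Nd p.1}) = 0) (hpos : Pinf {q | 1 < Nd q.1} ≠ 0) :
    Pinf {p | s < Nd p.1} ≠ 0 := by
  have := fun t => isProbabilityMeasure_tailLaw hV (hRV.measure_ne_zero t)
  have hratio := hRV.tendsto_measure_div_of_measure_eq_mul (S := fun ω => Nd (V ω).1) hs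
    ((ENNReal.tendsto_toReal (measure_ne_top _ _)).comp
      (hconv.tendsto_measure_of_null_frontier hA_fr))
    fun u hu => measure_superlevel_toReal_eq hV hN1 hNd hNd_cont.measurable hs hdom hu
  have hG : ∀ t, 0 < t → tailLaw V N1 t {q | 1 < Nd q.1}
      ≤ ENNReal.ofReal ((ℙ {ω | t < Nd (V ω).1}).toReal / (ℙ {ω | t < N1 (V ω)}).toReal) := by
    intro t ht
    have hmul := measure_mul_tailLaw_superlevel (s := 1) hV hN1 hNd hNd_cont.measurable ht
    simp only [one_mul] at hmul
    rw [← ENNReal.toReal_div, ENNReal.ofReal_toReal (ENNReal.div_ne_top (measure_ne_top _ _)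
        (hRV.measure_ne_zero t)), ENNReal.le_div_iff_mul_le (Or.inl (hRV.measure_ne_zero t))
        (Or.inl (measure_ne_top _ _)), mul_comm, hmul]
    exact measure_mono inter_subset_right
  intro hA
  refine hpos (nonpos_iff_eq_zero.mp ?_)
  calc Pinf {q | 1 < Nd q.1}
      ≤ liminf (fun t => tailLaw V N1 t {q | 1 < Nd q.1}) atTop :=
        hconv.le_liminf_measure_open (isOpen_lt continuous_const (hNd_cont.comp continuous_fst))
    _ ≤ liminf (fun t => ENNReal.ofReal ((ℙ {ω | t < Nd (V ω).1}).toReal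
          / (ℙ {ω | t < N1 (V ω)}).toReal)) atTop :=
        liminf_le_liminf ((eventually_gt_atTop 0).mono hG)
    _ = 0 := by
        rw [(ENNReal.tendsto_ofReal hratio).liminf_eq, hA]
        simp

end RescaledTarget

theorem rescaled_target_satisfies_tail_assumption_general
    {Ω : Type*} [MeasureSpace Ω] [IsProbabilityMeasure (ℙ : Measure Ω)] {d : ℕ}
    (X : Ω → (Fin d → ℝ)) (Z : Ω → ℝ)
    (hXmeas : Measurable X) (hZmeas : Measurable Z)
    (Nd : (Fin d → ℝ) → ℝ) (N1 : ((Fin d → ℝ) × ℝ) → ℝ)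
    (hNd : IsNormFun Nd) (hN1 : IsNormFun N1)
    (α : ℝ)
    (hRV : SurvivalRegVarying (fun ω => N1 (X ω, Z ω)) α)
    (Pinf : Measure ((Fin d → ℝ) × ℝ)) [IsProbabilityMeasure Pinf]
    (hconv : TendstoWeakly
      (fun t => Measure.map (fun ω => t⁻¹ • (X ω, Z ω)) (ℙ[|{ω | t < N1 (X ω, Z ω)}]))
      Pinf)
    (hpos : Pinf {q | 1 < Nd q.1} ≠ 0) :
    SurvivalRegVarying (fun ω => Nd (X ω)) α ∧
    ∃ Qinf : Measure ((Fin d → ℝ) × ℝ), IsProbabilityMeasure Qinf ∧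
      Qinf {q | ¬ 1 < Nd q.1} = 0 ∧
      TendstoWeakly
        (fun t => Measure.map (fun ω => (t⁻¹ • X ω, Z ω / Nd (X ω)))
          (ℙ[|{ω | t < Nd (X ω)}]))
        Qinf := by
  have hV : Measurable fun ω => (X ω, Z ω) := hXmeas.prodMk hZmeas
  have hNd_cont := hNd.continuous
  have hN1_meas := hN1.continuous.measurable
  replace hconv : TendstoWeakly (tailLaw (fun ω => (X ω, Z ω)) N1) Pinf := hconv
  have := fun t => isProbabilityMeasure_tailLaw hV (hRV.measure_ne_zero t)
  obtain ⟨s, hs, hdom, hA_fr⟩ := exists_le_mul_null_frontier_superlevel hNd hN1 Pinf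
  have hA_pos := measure_superlevel_ne_zero hV hN1_meas hNd hNd_cont hs hdom hRV hconv hA_fr hpos
  have hA_lim := (ENNReal.tendsto_toReal (measure_ne_top _ _)).comp
    (hconv.tendsto_measure_of_null_frontier hA_fr)
  have hcond_lim := (hconv.cond (isOpen_lt continuous_const (hNd_cont.comp continuous_fst)) hA_fr
    hA_pos).comp_tendsto (tendsto_id.atTop_div_const hs)
  have := cond_isProbabilityMeasure hA_pos
  refine ⟨hRV.of_measure_eq_mul hs hA_lim (ENNReal.toReal_ne_zero.mpr ⟨hA_pos, measure_ne_top _ _⟩)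
      fun u hu => measure_superlevel_toReal_eq hV hN1_meas hNd hNd_cont.measurable hs hdom hu,
    (Pinf[|{p | s < Nd p.1}]).map (cappedRatio Nd s),
    Measure.isProbabilityMeasure_map (continuous_cappedRatio hNd_cont hs).aemeasurable,
    map_cappedRatio_cond_superlevel_apply_eq_zero hNd hNd_cont hs _, ?_⟩
  refine (hcond_lim.map (continuous_cappedRatio hNd_cont hs)).congr'
    ((eventually_gt_atTop 0).mono fun t ht => ?_)
  exact (map_cond_superlevel_eq_map_cappedRatio hV hN1_meas hNd hNd_cont hs hdom ht).symm

/-- **Rescaling an unbounded target, part 1.**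
If `(X, Z)` is regularly varying in `ℝ^{d+1}` with limit distribution `Π_∞` supported
on `{‖(x,z)‖ > 1}` and charging `{‖x‖ > 1}`, then the pair `(X, Y)` with `Y = Z/‖X‖`
satisfies the tail regression assumption: `t ↦ P(‖X‖ > t)` is regularly varying with
index `α` and the conditional law of `(t⁻¹X, Y)` given `‖X‖ > t` converges weakly to a
probability distribution `P_∞` on `{(x,y) : ‖x‖ > 1}`. -/
theorem rescaled_target_satisfies_tail_assumption
    {Ω : Type*} [MeasureSpace Ω] [IsProbabilityMeasure (ℙ : Measure Ω)] {d : ℕ}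
    (X : Ω → (Fin d → ℝ)) (Z : Ω → ℝ)
    (hXmeas : Measurable X) (hZmeas : Measurable Z)
    (hX0 : ℙ {ω | X ω = 0} = 0)
    (Nd : (Fin d → ℝ) → ℝ) (N1 : ((Fin d → ℝ) × ℝ) → ℝ)
    (hNd : IsNormFun Nd) (hN1 : IsNormFun N1)
    (hbasis : ∀ i, Nd (Pi.single i 1) = 1) (hbasis1 : N1 (0, 1) = 1)
    (hcompat : ∀ x, N1 (x, 0) = Nd x)
    (α : ℝ) (hα : 0 < α)
    (hRV : SurvivalRegVarying (fun ω => N1 (X ω, Z ω)) α)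
    (Pinf : Measure ((Fin d → ℝ) × ℝ)) [IsProbabilityMeasure Pinf]
    (hsupp : Pinf {q | ¬ 1 < N1 q} = 0)
    (hconv : TendstoWeakly
      (fun t => Measure.map (fun ω => t⁻¹ • (X ω, Z ω)) (ℙ[|{ω | t < N1 (X ω, Z ω)}]))
      Pinf)
    (hpos : Pinf {q | 1 < Nd q.1} ≠ 0) :
    SurvivalRegVarying (fun ω => Nd (X ω)) α ∧
    ∃ Qinf : Measure ((Fin d → ℝ) × ℝ), IsProbabilityMeasure Qinf ∧
      Qinf {q | ¬ 1 < Nd q.1} = 0 ∧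
      TendstoWeakly
        (fun t => Measure.map (fun ω => (t⁻¹ • X ω, Z ω / Nd (X ω)))
          (ℙ[|{ω | t < Nd (X ω)}]))
        Qinf :=
  rescaled_target_satisfies_tail_assumption_general X Z hXmeas hZmeas Nd N1 hNd hN1 α hRV Pinf hconv
    hpos
end

section
/- Let W ∈ ℝ^{k×d} be a matrix, y ∈ ℝ^k, β* ∈ ℝ^d, λ > 0, and set e = y − Wβ*. Let β̂ be any minimizer over β ∈ ℝ^d of the Lagrangian Lasso objective (1/(2k)) ‖y − Wβ‖_2² + λ ‖β‖_1. If λ ≥ (2/k) ‖Wᵀ e‖_∞, then (1/k) ‖W(β̂ − β*)‖_2² ≤ 12 ‖β*‖_1 λ. -/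
/-!
Comparing the Lasso objective at `β̂` with its value at `β*` and writing `Δ = β̂ - β*`,
`e = y - Wβ*` gives the basic inequality
`c ‖WΔ‖₂² ≤ 2c ⟨Wᵀe, Δ⟩ + λ (‖β*‖₁ - ‖β̂‖₁)` with `c = 1/(2k)`.
Hölder's inequality and the choice of `λ` bound the noise term by `(λ/2) ‖Δ‖₁`, and the triangle
inequality `‖Δ‖₁ ≤ ‖β̂‖₁ + ‖β*‖₁` then leaves `c ‖WΔ‖₂² ≤ (3/2) λ ‖β*‖₁`.
-/

open Finset Matrix

variable {m n : Type*} [Fintype m] [Fintype n]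

lemma sum_sub_sq_eq (a b : m → ℝ) :
    ∑ i, (a i - b i) ^ 2 = ∑ i, a i ^ 2 - 2 * (a ⬝ᵥ b) + ∑ i, b i ^ 2 := by
  simp only [sub_sq, sum_add_distrib, sum_sub_distrib, dotProduct, mul_sum, mul_assoc]

lemma dotProduct_le_mul_sum_abs {u v : n → ℝ} {c : ℝ} (hu : ∀ j, |u j| ≤ c) :
    u ⬝ᵥ v ≤ c * ∑ j, |v j| := by
  rw [dotProduct, mul_sum]
  refine sum_le_sum fun j _ => ?_
  calc u j * v j ≤ |u j| * |v j| := by rw [← abs_mul]; exact le_abs_self _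
    _ ≤ c * |v j| := mul_le_mul_of_nonneg_right (hu j) (abs_nonneg _)

lemma sum_abs_sub_le (a b : n → ℝ) : ∑ j, |a j - b j| ≤ ∑ j, |a j| + ∑ j, |b j| := by
  rw [← sum_add_distrib]
  exact sum_le_sum fun j _ => abs_sub _ _

section Lasso

variable (W : Matrix m n ℝ) (y : m → ℝ) (βstar βhat : n → ℝ) {c lam : ℝ}

theorem lasso_basic_inequality
    (hbetter : c * ∑ i, (y i - (W *ᵥ βhat) i) ^ 2 + lam * ∑ j, |βhat j| ≤
      c * ∑ i, (y i - (W *ᵥ βstar) i) ^ 2 + lam * ∑ j, |βstar j|) :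
    c * ∑ i, (W *ᵥ (βhat - βstar)) i ^ 2 ≤
      2 * c * ((Wᵀ *ᵥ (y - W *ᵥ βstar)) ⬝ᵥ (βhat - βstar)) +
        lam * (∑ j, |βstar j| - ∑ j, |βhat j|) := by
  set e := y - W *ᵥ βstar
  set g := W *ᵥ (βhat - βstar)
  have hresidual : ∀ i, y i - (W *ᵥ βhat) i = e i - g i := fun i => by
    simp only [e, g, mulVec_sub, Pi.sub_apply]
    ring
  have hcross : e ⬝ᵥ g = (Wᵀ *ᵥ e) ⬝ᵥ (βhat - βstar) := by
    rw [dotProduct_mulVec, mulVec_transpose]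
  have hnull : ∀ i, y i - (W *ᵥ βstar) i = e i := fun _ => rfl
  simp only [hresidual, hnull] at hbetter
  rw [sum_sub_sq_eq, hcross] at hbetter
  linarith

theorem lasso_prediction_error_le (hc : 0 ≤ c) (hlam : 0 ≤ lam)
    (hbetter : c * ∑ i, (y i - (W *ᵥ βhat) i) ^ 2 + lam * ∑ j, |βhat j| ≤
      c * ∑ i, (y i - (W *ᵥ βstar) i) ^ 2 + lam * ∑ j, |βstar j|)
    (hlarge : ∀ j, 4 * c * |(Wᵀ *ᵥ (y - W *ᵥ βstar)) j| ≤ lam) :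
    2 * c * ∑ i, (W *ᵥ (βhat - βstar)) i ^ 2 ≤ 3 * lam * ∑ j, |βstar j| := by
  have hnoise : (2 * c) • (Wᵀ *ᵥ (y - W *ᵥ βstar)) ⬝ᵥ (βhat - βstar) ≤
      lam / 2 * ∑ j, |βhat j - βstar j| := by
    refine dotProduct_le_mul_sum_abs fun j => ?_
    rw [Pi.smul_apply, smul_eq_mul, abs_mul, abs_of_nonneg (by positivity)]
    linarith [hlarge j]
  rw [smul_dotProduct, smul_eq_mul] at hnoise
  have hbasic := lasso_basic_inequality W y βstar βhat hbetter
  have htriangle :=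
    mul_le_mul_of_nonneg_left (sum_abs_sub_le βhat βstar) (by positivity : 0 ≤ lam / 2)
  have hhat : 0 ≤ lam * ∑ j, |βhat j| := by positivity
  linarith

end Lasso

theorem lasso_slow_rate_prediction_error_general
    {k d : ℕ}
    (W : Matrix (Fin k) (Fin d) ℝ) (y : Fin k → ℝ)
    (βstar : Fin d → ℝ) (lam : ℝ) (hlam : 0 < lam)
    (e : Fin k → ℝ) (he : e = y - W.mulVec βstar)
    (βhat : Fin d → ℝ)
    (hmin : ∀ β : Fin d → ℝ,
      (1 / (2 * (k : ℝ))) * ∑ i, (y i - W.mulVec βhat i) ^ 2 + lam * ∑ j, |βhat j| ≤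
      (1 / (2 * (k : ℝ))) * ∑ i, (y i - W.mulVec β i) ^ 2 + lam * ∑ j, |β j|)
    (hlarge : ∀ j, (2 / (k : ℝ)) * |W.transpose.mulVec e j| ≤ lam) :
    (1 / (k : ℝ)) * ∑ i, (W.mulVec (βhat - βstar) i) ^ 2 ≤ 12 * (∑ j, |βstar j|) * lam := by
  subst he
  have hscale : 2 * (1 / (2 * (k : ℝ))) = 1 / k := by field_simp
  have hbound := lasso_prediction_error_le W y βstar βhat (by positivity) hlam.le (hmin βstar)
    fun j => by simpa only [show (2 : ℝ) / k = 4 * (1 / (2 * k)) by ring] using hlarge j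
  rw [hscale] at hbound
  have hnorm : 0 ≤ lam * ∑ j, |βstar j| := by positivity
  linarith

/-- **Slow-rate prediction error bound for the (Lagrangian) Lasso.**
If `λ ≥ (2/k) ‖Wᵀ e‖_∞` where `e = y - W β*`, then any minimizer `β̂` of
`(1/(2k)) ‖y - Wβ‖₂² + λ ‖β‖₁` satisfies `(1/k) ‖W(β̂ - β*)‖₂² ≤ 12 ‖β*‖₁ λ`. -/
theorem lasso_slow_rate_prediction_error
    {k d : ℕ} (hk : 0 < k)
    (W : Matrix (Fin k) (Fin d) ℝ) (y : Fin k → ℝ)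
    (βstar : Fin d → ℝ) (lam : ℝ) (hlam : 0 < lam)
    (e : Fin k → ℝ) (he : e = y - W.mulVec βstar)
    (βhat : Fin d → ℝ)
    (hmin : ∀ β : Fin d → ℝ,
      (1 / (2 * (k : ℝ))) * ∑ i, (y i - W.mulVec βhat i) ^ 2 + lam * ∑ j, |βhat j| ≤
      (1 / (2 * (k : ℝ))) * ∑ i, (y i - W.mulVec β i) ^ 2 + lam * ∑ j, |β j|)
    (hlarge : ∀ j, (2 / (k : ℝ)) * |W.transpose.mulVec e j| ≤ lam) :
    (1 / (k : ℝ)) * ∑ i, (W.mulVec (βhat - βstar) i) ^ 2 ≤ 12 * (∑ j, |βstar j|) * lam :=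
  lasso_slow_rate_prediction_error_general W y βstar lam hlam e he βhat hmin hlarge
end
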